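/- arXiv:0912.5174 — 4 statements merged into one kernel-verified Lean document; each statement's English description precedes it below -/
import Mathlib

section
/- Let d ≥ 3, let n ≥ 1 be an integer, let l ∈ {1,…,d}, and let W : ℝ^d → [0,∞) be measurable with K := sup_{p ∈ ℝ^d} ∫_{ℝ^d} W(p + q) |q|^{−2} dq < ∞. Let û : (ℝ^d)^n → ℂ be measurable and symmetric, i.e. û(p_{σ(1)},…,p_{σ(n)}) = û(p_1,…,p_n) for every permutation σ of {1,…,n}. Then, with the convention that both sides are values in [0,∞], ∫_{(ℝ^d)^{n+1}} |p_1 + ⋯ + p_{n+1}|^{−2} · | Σ_{m=1}^{n+1} (p_m)_l · û(p_1,…,p_{m−1},p_{m+1},…,p_{n+1}) |² · Π_{m=1}^{n+1} W(p_m)|p_m|^{−2} dp_1⋯dp_{n+1} ≤ K · (n+1)² · ∫_{(ℝ^d)^n} |û(p_1,…,p_n)|² · Π_{m=1}^{n} W(p_m)|p_m|^{−2} dp_1⋯dp_n. -/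
/-!
Expand the square by Cauchy–Schwarz, paying a factor `n + 1`, so that it suffices to bound each
of the `n + 1` diagonal terms by `K ∫ |û|² Π W(p_m)|p_m|^{-2}`. In the `m`-th term integrate out
`q = p_m` first, with `x` the sum of the other momenta: since `(q)_l² ≤ |q|²`, the factor
`(q)_l² |q|^{-2}` is at most one and the `q`-integral is at most
`∫ W(q) |q + x|^{-2} dq = ∫ W(-x + q) |q|^{-2} dq ≤ K`.
-/

open MeasureTheory
open scoped ENNReal NNReal

theorem coe_nnnorm_sum_smul_sq_le_card_mul {ι 𝕜 E : Type*} [Fintype ι] [SeminormedRing 𝕜]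
    [SeminormedAddCommGroup E] [Module 𝕜 E] [NormSMulClass 𝕜 E] (a : ι → 𝕜) (v : ι → E) :
    (‖∑ i, a i • v i‖₊ : ℝ≥0∞) ^ 2 ≤ Fintype.card ι * ∑ i, ((‖a i‖₊ : ℝ≥0∞) * ‖v i‖₊) ^ 2 := by
  have h : ‖∑ i, a i • v i‖₊ ^ 2 ≤ Fintype.card ι * ∑ i, (‖a i‖₊ * ‖v i‖₊) ^ 2 := by
    simpa only [nnnorm_smul, Finset.card_univ] using
      (pow_le_pow_left₀ zero_le (nnnorm_sum_le _ _) 2).trans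
        (sq_sum_le_card_mul_sum_sq (s := Finset.univ) (f := fun i => ‖a i • v i‖₊))
  exact_mod_cast h

theorem coe_nnnorm_sq_mul_ofReal_rpow_neg_two_le_one {E F : Type*} [SeminormedAddCommGroup E]
    [SeminormedAddCommGroup F] {x : E} {y : F} (h : ‖y‖ ≤ ‖x‖) :
    (‖y‖₊ : ℝ≥0∞) ^ 2 * ENNReal.ofReal (‖x‖ ^ (-2 : ℝ)) ≤ 1 := by
  rw [← enorm_eq_nnnorm, ← ofReal_norm, ← ENNReal.ofReal_pow (norm_nonneg _),
    ← ENNReal.ofReal_mul (by positivity), ENNReal.ofReal_le_one,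
    Real.rpow_neg (norm_nonneg _), Real.rpow_two]
  exact mul_inv_le_one_of_le₀ (pow_le_pow_left₀ (norm_nonneg _) h 2) (by positivity)

theorem MeasureTheory.lintegral_pi_eq_lintegral_lintegral_insertNth {n : ℕ} {α : Type*}
    [MeasurableSpace α] (μ : Measure α) [SigmaFinite μ] (m : Fin (n + 1))
    {f : (Fin (n + 1) → α) → ℝ≥0∞} (hf : Measurable f) :
    ∫⁻ p, f p ∂Measure.pi (fun _ => μ) =
      ∫⁻ r, ∫⁻ q, f (m.insertNth q r) ∂μ ∂Measure.pi (fun _ => μ) := by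
  have he := (measurePreserving_piFinSuccAbove (fun _ => μ) m).symm
  rw [← he.lintegral_comp_emb (MeasurableEquiv.measurableEmbedding _),
    lintegral_prod_symm _ (by exact (hf.comp (MeasurableEquiv.measurable _)).aemeasurable)]
  rfl

noncomputable def spectralDensity {E : Type*} [Norm E] (W : E → ℝ) (q : E) : ℝ≥0∞ :=
  ENNReal.ofReal (W q * ‖q‖ ^ (-2 : ℝ))

section

variable {ι : Type*} [Fintype ι] {W : EuclideanSpace ℝ ι → ℝ} {K : ℝ}

theorem lintegral_inv_sq_mul_coord_sq_mul_spectralDensity_le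
    (hK : ∀ p : EuclideanSpace ℝ ι,
      ∫⁻ q : EuclideanSpace ℝ ι, ENNReal.ofReal (W (p + q) * ‖q‖ ^ (-2 : ℝ)) ≤ ENNReal.ofReal K)
    (l : ι) (x : EuclideanSpace ℝ ι) :
    ∫⁻ q : EuclideanSpace ℝ ι,
        ENNReal.ofReal (‖q + x‖ ^ (-2 : ℝ)) * (‖q l‖₊ : ℝ≥0∞) ^ 2 * spectralDensity W q
      ≤ ENNReal.ofReal K := by
  have hpt (q : EuclideanSpace ℝ ι) :
      ENNReal.ofReal (‖q + x‖ ^ (-2 : ℝ)) * (‖q l‖₊ : ℝ≥0∞) ^ 2 * spectralDensity W q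
        ≤ ENNReal.ofReal (W q * ‖q + x‖ ^ (-2 : ℝ)) := by
    have hcoord := coe_nnnorm_sq_mul_ofReal_rpow_neg_two_le_one (PiLp.norm_apply_le q l)
    rw [spectralDensity, ENNReal.ofReal_mul' (by positivity), ENNReal.ofReal_mul' (by positivity)]
    calc ENNReal.ofReal (‖q + x‖ ^ (-2 : ℝ)) * (‖q l‖₊ : ℝ≥0∞) ^ 2 *
          (ENNReal.ofReal (W q) * ENNReal.ofReal (‖q‖ ^ (-2 : ℝ)))
        = ENNReal.ofReal (W q) * ENNReal.ofReal (‖q + x‖ ^ (-2 : ℝ)) *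
          ((‖q l‖₊ : ℝ≥0∞) ^ 2 * ENNReal.ofReal (‖q‖ ^ (-2 : ℝ))) := by ring
      _ ≤ ENNReal.ofReal (W q) * ENNReal.ofReal (‖q + x‖ ^ (-2 : ℝ)) :=
        mul_le_of_le_one_right' hcoord
  calc _ ≤ ∫⁻ q, ENNReal.ofReal (W q * ‖q + x‖ ^ (-2 : ℝ)) := lintegral_mono hpt
    _ = ∫⁻ q, ENNReal.ofReal (W (-x + q) * ‖q‖ ^ (-2 : ℝ)) := by
      rw [← lintegral_add_right_eq_self (fun q => ENNReal.ofReal (W (-x + q) * ‖q‖ ^ (-2 : ℝ))) x]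
      simp only [neg_add_cancel_comm_assoc]
    _ ≤ ENNReal.ofReal K := hK (-x)

theorem lintegral_inv_sq_mul_coord_mul_removeNth_sq_le
    {n : ℕ} {F : Type*} [SeminormedAddCommGroup F] [MeasurableSpace F] [BorelSpace F]
    (hWmeas : Measurable W)
    (hK : ∀ p : EuclideanSpace ℝ ι,
      ∫⁻ q : EuclideanSpace ℝ ι, ENNReal.ofReal (W (p + q) * ‖q‖ ^ (-2 : ℝ)) ≤ ENNReal.ofReal K)
    (l : ι) {u : (Fin n → EuclideanSpace ℝ ι) → F} (hu : Measurable u) (m : Fin (n + 1)) :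
    ∫⁻ p : Fin (n + 1) → EuclideanSpace ℝ ι,
        ENNReal.ofReal (‖∑ k, p k‖ ^ (-2 : ℝ)) *
        ((‖p m l‖₊ : ℝ≥0∞) * ‖u (fun i => p (m.succAbove i))‖₊) ^ 2 *
        ∏ k, spectralDensity W (p k)
      ≤ ENNReal.ofReal K *
        ∫⁻ r : Fin n → EuclideanSpace ℝ ι, (‖u r‖₊ : ℝ≥0∞) ^ 2 * ∏ k, spectralDensity W (r k) := by
  rw [volume_pi, volume_pi, lintegral_pi_eq_lintegral_lintegral_insertNth _ m
      (by unfold spectralDensity; fun_prop),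
    ← lintegral_const_mul' _ _ ENNReal.ofReal_ne_top]
  refine lintegral_mono fun r => ?_
  simp only [Fin.sum_univ_succAbove _ m, Fin.prod_univ_succAbove _ m, Fin.insertNth_apply_same,
    Fin.insertNth_apply_succAbove]
  calc _ = (‖u r‖₊ : ℝ≥0∞) ^ 2 * (∏ k, spectralDensity W (r k)) *
        ∫⁻ q, ENNReal.ofReal (‖q + ∑ k, r k‖ ^ (-2 : ℝ)) * (‖q l‖₊ : ℝ≥0∞) ^ 2 *
          spectralDensity W q := by
        rw [← lintegral_const_mul _ (by unfold spectralDensity; fun_prop)]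
        congr 1 with q
        ring
    _ ≤ _ := by
      rw [mul_comm]
      gcongr
      exact lintegral_inv_sq_mul_coord_sq_mul_spectralDensity_le hK l _

end

theorem graded_sector_core_estimate_general (d n : ℕ) (l : Fin d)
    (W : EuclideanSpace ℝ (Fin d) → ℝ) (hWmeas : Measurable W)
    (K : ℝ)
    (hK : ∀ p : EuclideanSpace ℝ (Fin d),
      ∫⁻ q : EuclideanSpace ℝ (Fin d), ENNReal.ofReal (W (p + q) * ‖q‖ ^ (-2 : ℝ))
        ≤ ENNReal.ofReal K)
    (u : (Fin n → EuclideanSpace ℝ (Fin d)) → ℂ) (hu : Measurable u) :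
    ∫⁻ p : Fin (n + 1) → EuclideanSpace ℝ (Fin d),
        ENNReal.ofReal (‖∑ m, p m‖ ^ (-2 : ℝ)) *
        (‖∑ m : Fin (n + 1), (p m l) • u (fun i => p (m.succAbove i))‖₊ : ℝ≥0∞) ^ 2 *
        ∏ m : Fin (n + 1), ENNReal.ofReal (W (p m) * ‖p m‖ ^ (-2 : ℝ))
      ≤ ENNReal.ofReal K * ((n : ℝ≥0∞) + 1) ^ 2 *
        ∫⁻ p : Fin n → EuclideanSpace ℝ (Fin d),
          (‖u p‖₊ : ℝ≥0∞) ^ 2 * ∏ m : Fin n, ENNReal.ofReal (W (p m) * ‖p m‖ ^ (-2 : ℝ)) := by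
  set term : Fin (n + 1) → (Fin (n + 1) → EuclideanSpace ℝ (Fin d)) → ℝ≥0∞ := fun m p =>
    ENNReal.ofReal (‖∑ k, p k‖ ^ (-2 : ℝ)) *
      ((‖p m l‖₊ : ℝ≥0∞) * ‖u (fun i => p (m.succAbove i))‖₊) ^ 2 * ∏ k, spectralDensity W (p k)
  have cauchy_schwarz (p : Fin (n + 1) → EuclideanSpace ℝ (Fin d)) :
      ENNReal.ofReal (‖∑ m, p m‖ ^ (-2 : ℝ)) *
        (‖∑ m : Fin (n + 1), (p m l) • u (fun i => p (m.succAbove i))‖₊ : ℝ≥0∞) ^ 2 *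
        ∏ m, spectralDensity W (p m) ≤ (n + 1 : ℕ) * ∑ m, term m p := by
    grw [coe_nnnorm_sum_smul_sq_le_card_mul, Fintype.card_fin]
    simp only [term, Finset.mul_sum, Finset.sum_mul]
    exact (Finset.sum_congr rfl fun m _ => by ring).le
  calc _ ≤ ∫⁻ p, (n + 1 : ℕ) * ∑ m, term m p := lintegral_mono cauchy_schwarz
    _ = (n + 1 : ℕ) * ∑ m, ∫⁻ p, term m p := by
      rw [lintegral_const_mul' _ _ (ENNReal.natCast_ne_top _),
        lintegral_finsetSum _ fun m _ => by unfold term spectralDensity; fun_prop]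
    _ ≤ (n + 1 : ℕ) * ∑ _m : Fin (n + 1), ENNReal.ofReal K *
          ∫⁻ r : Fin n → EuclideanSpace ℝ (Fin d),
            (‖u r‖₊ : ℝ≥0∞) ^ 2 * ∏ k, spectralDensity W (r k) := by
      gcongr with m
      exact lintegral_inv_sq_mul_coord_mul_removeNth_sq_le hWmeas hK l hu m
    _ = _ := by
      simp only [Finset.sum_const, Finset.card_univ, Fintype.card_fin, nsmul_eq_mul,
        spectralDensity]
      push_cast
      ring

/-- the core weighted `L²` estimate of the graded sector condition:
with `K = sup_p ∫ W(p+q)|q|^{-2} dq < ∞` and a symmetric `û` on `(ℝ^d)^n`,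
`∫ |Σp_m|^{-2} |Σ_m (p_m)_l û(p \ m)|² Π W(p_m)|p_m|^{-2} dp
  ≤ K (n+1)² ∫ |û|² Π W(p_m)|p_m|^{-2} dp`, both sides in `[0,∞]`. -/
theorem graded_sector_core_estimate (d n : ℕ) (hd : 3 ≤ d) (hn : 1 ≤ n) (l : Fin d)
    (W : EuclideanSpace ℝ (Fin d) → ℝ) (hW0 : ∀ p, 0 ≤ W p) (hWmeas : Measurable W)
    (K : ℝ)
    (hK : ∀ p : EuclideanSpace ℝ (Fin d),
      ∫⁻ q : EuclideanSpace ℝ (Fin d), ENNReal.ofReal (W (p + q) * ‖q‖ ^ (-2 : ℝ))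
        ≤ ENNReal.ofReal K)
    (u : (Fin n → EuclideanSpace ℝ (Fin d)) → ℂ) (hu : Measurable u)
    (hsymm : ∀ (σ : Equiv.Perm (Fin n)) (p : Fin n → EuclideanSpace ℝ (Fin d)),
      u (p ∘ σ) = u p) :
    ∫⁻ p : Fin (n + 1) → EuclideanSpace ℝ (Fin d),
        ENNReal.ofReal (‖∑ m, p m‖ ^ (-2 : ℝ)) *
        (‖∑ m : Fin (n + 1), (p m l) • u (fun i => p (m.succAbove i))‖₊ : ℝ≥0∞) ^ 2 *
        ∏ m : Fin (n + 1), ENNReal.ofReal (W (p m) * ‖p m‖ ^ (-2 : ℝ))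
      ≤ ENNReal.ofReal K * ((n : ℝ≥0∞) + 1) ^ 2 *
        ∫⁻ p : Fin n → EuclideanSpace ℝ (Fin d),
          (‖u p‖₊ : ℝ≥0∞) ^ 2 * ∏ m : Fin n, ENNReal.ofReal (W (p m) * ‖p m‖ ^ (-2 : ℝ)) :=
  graded_sector_core_estimate_general d n l W hWmeas K hK u hu
end

section
/- Let d ≥ 1, let C : ℝ^d → ℝ be a bounded continuous function, and let u : ℝ^d → ℝ be a Schwartz function. Then ∫_{ℝ^d} ∫_{ℝ^d} (Δu)(x) · C(x − y) · u(y) dx dy = − Σ_{l=1}^{d} ∫_{ℝ^d} ∫_{ℝ^d} (∂_l u)(x) · C(x − y) · (∂_l u)(y) dx dy, all integrals being absolutely convergent. -/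
/-!
Substituting `x = z + y` rewrites `∫∫ f(x) C(x - y) g(y) dx dy` as `∫ C(z) (∫ f(z + y) g(y) dy) dz`.
The kernel `C`, which need not be differentiable, then sits outside the inner integral, a pairing
of two Schwartz functions in which `∂_v` moves from one factor to the other by integration by
parts: `∫∫ ∂_v f(x) C(x - y) g(y) = -∫∫ f(x) C(x - y) ∂_v g(y)`. Taking `f = ∂_l u`, `g = u`
and summing over `l` gives the claim.
-/

open MeasureTheory Filter SchwartzMap
open scoped LineDeriv

section PairingWithKernel

variable {E : Type*} [NormedAddCommGroup E] [MeasurableSpace E] [BorelSpace E]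
  [SecondCountableTopology E] {μ ν : Measure E} {f g C : E → ℝ}

theorem integrable_mul_comp_sub_mul [SFinite μ] [SFinite ν] (hf : Integrable f μ)
    (hg : Integrable g ν) (hC : Continuous C) {M : ℝ} (hM : ∀ x, |C x| ≤ M) :
    Integrable (fun z : E × E => f z.1 * C (z.1 - z.2) * g z.2) (μ.prod ν) := by
  have hCsub : AEStronglyMeasurable (fun z : E × E => C (z.1 - z.2)) (μ.prod ν) :=
    (hC.comp (continuous_fst.sub continuous_snd)).aestronglyMeasurable
  refine ((hf.mul_prod hg).bdd_mul hCsub (Eventually.of_forall fun z => hM _)).congr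
    (Eventually.of_forall fun z => ?_)
  ring

theorem integral_integral_mul_comp_sub_mul [SFinite μ] [SFinite ν] [μ.IsAddRightInvariant]
    (hF : Integrable (fun z : E × E => f z.1 * C (z.1 - z.2) * g z.2) (μ.prod ν)) :
    ∫ x, ∫ y, f x * C (x - y) * g y ∂ν ∂μ = ∫ z, C z * ∫ y, f (z + y) * g y ∂ν ∂μ := by
  have hshear := measurePreserving_add_prod μ ν
  have hsheared : Integrable (fun z : E × E => f (z.1 + z.2) * C z.1 * g z.2) (μ.prod ν) := by
    simpa [Function.comp_def] using hshear.integrable_comp_of_integrable hF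
  have hchange := integral_map hshear.measurable.aemeasurable
    (hshear.map_eq.symm ▸ hF.aestronglyMeasurable)
  rw [hshear.map_eq] at hchange
  calc ∫ x, ∫ y, f x * C (x - y) * g y ∂ν ∂μ
      = ∫ z, f z.1 * C (z.1 - z.2) * g z.2 ∂(μ.prod ν) := integral_integral hF
    _ = ∫ z, f (z.1 + z.2) * C z.1 * g z.2 ∂(μ.prod ν) := by
      simpa only [add_sub_cancel_right] using hchange
    _ = ∫ z, ∫ y, f (z + y) * C z * g y ∂ν ∂μ :=
      (integral_integral (f := fun z y => f (z + y) * C z * g y) hsheared).symm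
    _ = ∫ z, C z * ∫ y, f (z + y) * g y ∂ν ∂μ := by
      congr 1 with z
      rw [← integral_const_mul]
      congr 1 with y
      ring

end PairingWithKernel

theorem integral_integral_finsetSum {α β ι : Type*} [MeasurableSpace α] [MeasurableSpace β]
    {μ : Measure α} {ν : Measure β} [SFinite μ] [SFinite ν] (s : Finset ι) {F : ι → α → β → ℝ}
    (hF : ∀ i ∈ s, Integrable (Function.uncurry (F i)) (μ.prod ν)) :
    ∫ x, ∫ y, ∑ i ∈ s, F i x y ∂ν ∂μ = ∑ i ∈ s, ∫ x, ∫ y, F i x y ∂ν ∂μ := by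
  rw [integral_integral (integrable_finsetSum s hF)]
  exact (integral_finsetSum s hF).trans
    (Finset.sum_congr rfl fun i hi => (integral_integral (hF i hi)).symm)

namespace SchwartzMap

variable {E F : Type*} [NormedAddCommGroup E] [NormedSpace ℝ E]
  [NormedAddCommGroup F] [NormedSpace ℝ F]

theorem lineDerivOp_compSubConstCLM (f : 𝓢(E, F)) (a v : E) :
    ∂_{v} (f.compSubConstCLM ℝ a) = (∂_{v} f).compSubConstCLM ℝ a := by
  ext x
  simp only [lineDerivOp_apply_eq_fderiv, compSubConstCLM_apply]
  exact congrArg (· v) (fderiv_comp_sub (𝕜 := ℝ) (f := ⇑f) a)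

variable [FiniteDimensional ℝ E] [MeasurableSpace E] [BorelSpace E] {μ : Measure E}
  [μ.IsAddHaarMeasure]

theorem integral_lineDerivOp_comp_add_mul (f g : 𝓢(E, ℝ)) (v z : E) :
    ∫ y, ∂_{v} f (z + y) * g y ∂μ = -∫ y, f (z + y) * ∂_{v} g y ∂μ := by
  have hibp := integral_mul_lineDerivOp_right_eq_neg_left (μ := μ) (f.compSubConstCLM ℝ (-z)) g v
  simp only [lineDerivOp_compSubConstCLM, compSubConstCLM_apply, sub_neg_eq_add,
    add_comm _ z] at hibp
  rw [hibp, neg_neg]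

theorem integral_integral_lineDerivOp_mul_comp_sub_mul (f g : 𝓢(E, ℝ)) (v : E) {C : E → ℝ}
    (hC : Continuous C) {M : ℝ} (hM : ∀ x, |C x| ≤ M) :
    ∫ x, ∫ y, ∂_{v} f x * C (x - y) * g y ∂μ ∂μ =
      -∫ x, ∫ y, f x * C (x - y) * ∂_{v} g y ∂μ ∂μ := by
  rw [integral_integral_mul_comp_sub_mul
      (integrable_mul_comp_sub_mul (∂_{v} f).integrable g.integrable hC hM),
    integral_integral_mul_comp_sub_mul
      (integrable_mul_comp_sub_mul f.integrable (∂_{v} g).integrable hC hM),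
    ← integral_neg]
  simp only [integral_lineDerivOp_comp_add_mul, mul_neg]

end SchwartzMap

theorem laplacian_covariance_integration_by_parts_general (d : ℕ)
    (C : EuclideanSpace ℝ (Fin d) → ℝ)
    (hCcont : Continuous C) (hCbdd : ∃ M : ℝ, ∀ x, |C x| ≤ M)
    (u : SchwartzMap (EuclideanSpace ℝ (Fin d)) ℝ) :
    Integrable (fun z : EuclideanSpace ℝ (Fin d) × EuclideanSpace ℝ (Fin d) =>
      (∑ l : Fin d, fderiv ℝ (fun w => fderiv ℝ (fun v => u v) w (EuclideanSpace.single l 1))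
          z.1 (EuclideanSpace.single l 1)) * C (z.1 - z.2) * u z.2) ∧
    (∀ l : Fin d,
      Integrable (fun z : EuclideanSpace ℝ (Fin d) × EuclideanSpace ℝ (Fin d) =>
        fderiv ℝ (fun v => u v) z.1 (EuclideanSpace.single l 1) * C (z.1 - z.2) *
          fderiv ℝ (fun v => u v) z.2 (EuclideanSpace.single l 1))) ∧
    (∫ x : EuclideanSpace ℝ (Fin d), ∫ y : EuclideanSpace ℝ (Fin d),
        (∑ l : Fin d, fderiv ℝ (fun w => fderiv ℝ (fun v => u v) w (EuclideanSpace.single l 1))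
            x (EuclideanSpace.single l 1)) * C (x - y) * u y
      = -∑ l : Fin d, ∫ x : EuclideanSpace ℝ (Fin d), ∫ y : EuclideanSpace ℝ (Fin d),
          fderiv ℝ (fun v => u v) x (EuclideanSpace.single l 1) * C (x - y) *
            fderiv ℝ (fun v => u v) y (EuclideanSpace.single l 1)) := by
  obtain ⟨M, hM⟩ := hCbdd
  have hint (f g : 𝓢(EuclideanSpace ℝ (Fin d), ℝ)) :
      Integrable (fun z : EuclideanSpace ℝ (Fin d) × EuclideanSpace ℝ (Fin d) =>
        f z.1 * C (z.1 - z.2) * g z.2) :=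
    integrable_mul_comp_sub_mul f.integrable g.integrable hCcont hM
  simp only [← lineDerivOp_apply_eq_fderiv, Finset.sum_mul]
  refine ⟨integrable_finsetSum _ fun l _ => hint _ _, fun l => hint _ _, ?_⟩
  rw [integral_integral_finsetSum _ fun l _ => hint _ _, ← Finset.sum_neg_distrib]
  exact Finset.sum_congr rfl fun l _ =>
    integral_integral_lineDerivOp_mul_comp_sub_mul _ _ _ hCcont hM

/-- for a bounded continuous function `C` and a Schwartz function `u`,
`∫∫ Δu(x) C(x-y) u(y) dx dy = - Σ_l ∫∫ ∂_l u(x) C(x-y) ∂_l u(y) dx dy`,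
all the double integrals being absolutely convergent. -/
theorem laplacian_covariance_integration_by_parts (d : ℕ) (hd : 1 ≤ d)
    (C : EuclideanSpace ℝ (Fin d) → ℝ)
    (hCcont : Continuous C) (hCbdd : ∃ M : ℝ, ∀ x, |C x| ≤ M)
    (u : SchwartzMap (EuclideanSpace ℝ (Fin d)) ℝ) :
    Integrable (fun z : EuclideanSpace ℝ (Fin d) × EuclideanSpace ℝ (Fin d) =>
      (∑ l : Fin d, fderiv ℝ (fun w => fderiv ℝ (fun v => u v) w (EuclideanSpace.single l 1))
          z.1 (EuclideanSpace.single l 1)) * C (z.1 - z.2) * u z.2) ∧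
    (∀ l : Fin d,
      Integrable (fun z : EuclideanSpace ℝ (Fin d) × EuclideanSpace ℝ (Fin d) =>
        fderiv ℝ (fun v => u v) z.1 (EuclideanSpace.single l 1) * C (z.1 - z.2) *
          fderiv ℝ (fun v => u v) z.2 (EuclideanSpace.single l 1))) ∧
    (∫ x : EuclideanSpace ℝ (Fin d), ∫ y : EuclideanSpace ℝ (Fin d),
        (∑ l : Fin d, fderiv ℝ (fun w => fderiv ℝ (fun v => u v) w (EuclideanSpace.single l 1))
            x (EuclideanSpace.single l 1)) * C (x - y) * u y
      = -∑ l : Fin d, ∫ x : EuclideanSpace ℝ (Fin d), ∫ y : EuclideanSpace ℝ (Fin d),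
          fderiv ℝ (fun v => u v) x (EuclideanSpace.single l 1) * C (x - y) *
            fderiv ℝ (fun v => u v) y (EuclideanSpace.single l 1)) :=
  laplacian_covariance_integration_by_parts_general d C hCcont hCbdd u
end

section
/- Let H be a complex Hilbert space, G : H → H a bounded linear operator, and S := −(1/2)(G + G*). Assume ⟨x, S x⟩ ≥ 0 for all x ∈ H and let √S be the positive square root of S. Let λ > 0, λ' > 0, and let f, u, u' ∈ H satisfy λ u − G u = f and λ' u' − G u' = f. Then (λ + λ') · Re ⟨u, u'⟩ = ‖√S (u − u')‖² + λ ‖u‖² + λ' ‖u'‖². -/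
/-!
Put `w = u - u'`. Subtracting the two resolvent equations gives `G w = λ u - λ' u'`. Since `√S` is
self-adjoint, `‖√S w‖² = Re ⟪w, S w⟫ = -Re ⟪w, G w⟫`, and expanding `Re ⟪w, λ u - λ' u'⟫` turns
this into the identity.
-/

open ComplexOrder

noncomputable section

open scoped InnerProductSpace
open RCLike ContinuousLinearMap

theorem ContinuousLinearMap.isPositive_of_inner_nonneg {H : Type*} [NormedAddCommGroup H]
    [InnerProductSpace ℂ H] {T : H →L[ℂ] H} (hT : ∀ x, 0 ≤ ⟪x, T x⟫_ℂ) : T.IsPositive := by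
  have hreal : ∀ x, ⟪T x, x⟫_ℂ = ⟪x, T x⟫_ℂ := fun x => by
    rw [← inner_conj_symm]; exact (hT x).isSelfAdjoint
  refine (isPositive_iff T).2 ⟨?_, fun x => hreal x ▸ hT x⟩
  rw [LinearMap.isSymmetric_iff_inner_map_self_real]
  intro x
  rw [coe_coe, inner_conj_symm, hreal]

theorem ContinuousLinearMap.re_inner_neg_half_smul_add_adjoint_apply_self {𝕜 E : Type*} [RCLike 𝕜]
    [NormedAddCommGroup E] [InnerProductSpace 𝕜 E] [CompleteSpace E] (A : E →L[𝕜] E) (x : E) :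
    re ⟪x, ((-(2 : 𝕜)⁻¹) • (A + adjoint A)) x⟫_𝕜 = -re ⟪x, A x⟫_𝕜 := by
  have hadj : re ⟪x, adjoint A x⟫_𝕜 = re ⟪x, A x⟫_𝕜 := by
    rw [adjoint_inner_right, ← inner_conj_symm, conj_re]
  have hhalf : (-(2 : 𝕜)⁻¹) = ((-2⁻¹ : ℝ) : 𝕜) := by push_cast; rfl
  simp only [hhalf, smul_apply, add_apply, inner_smul_right, inner_add_right, re_ofReal_mul,
    map_add, hadj]
  ring

theorem re_inner_sub_ofReal_smul_sub_ofReal_smul {𝕜 E : Type*} [RCLike 𝕜]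
    [NormedAddCommGroup E] [InnerProductSpace 𝕜 E] (u u' : E) (a b : ℝ) :
    re ⟪u - u', (a : 𝕜) • u - (b : 𝕜) • u'⟫_𝕜
      = a * ‖u‖ ^ 2 + b * ‖u'‖ ^ 2 - (a + b) * re ⟪u, u'⟫_𝕜 := by
  have hsymm : re ⟪u', u⟫_𝕜 = re ⟪u, u'⟫_𝕜 := inner_re_symm u' u
  simp only [inner_sub_left, inner_sub_right, inner_smul_real_right, map_sub, smul_re,
    inner_self_eq_norm_sq, hsymm]
  ring

theorem map_sub_eq_sub_of_sub_map_eq {M F : Type*} [AddCommGroup M] [FunLike F M M]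
    [AddMonoidHomClass F M M] (G : F) {a b u u' f : M} (hu : a - G u = f) (hu' : b - G u' = f) :
    G (u - u') = a - b := by
  rw [map_sub]
  exact (sub_eq_sub_iff_sub_eq_sub.mp (hu.trans hu'.symm)).symm

theorem kipnis_varadhan_two_resolvent_identity_general {H : Type*}
    [NormedAddCommGroup H] [InnerProductSpace ℂ H] [CompleteSpace H]
    (G S sqrtS : H →L[ℂ] H)
    (hSdef : S = (-(2 : ℂ)⁻¹) • (G + ContinuousLinearMap.adjoint G))
    (hsqrtSpos : ∀ x : H, 0 ≤ (inner ℂ x (sqrtS x) : ℂ))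
    (hsqrtS : sqrtS ∘L sqrtS = S)
    (lam lam' : ℝ)
    (f u u' : H) (hu : lam • u - G u = f) (hu' : lam' • u' - G u' = f) :
    (lam + lam') * (inner ℂ u u' : ℂ).re
      = ‖sqrtS (u - u')‖ ^ 2 + lam * ‖u‖ ^ 2 + lam' * ‖u'‖ ^ 2 := by
  have hadj : adjoint sqrtS = sqrtS := (isPositive_of_inner_nonneg hsqrtSpos).isSelfAdjoint
  have henergy : ‖sqrtS (u - u')‖ ^ 2 = -(⟪u - u', G (u - u')⟫_ℂ).re := by
    rw [apply_norm_sq_eq_inner_adjoint_right, hadj, hsqrtS, hSdef,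
      re_inner_neg_half_smul_add_adjoint_apply_self, re_to_complex]
  have hdissip : (⟪u - u', G (u - u')⟫_ℂ).re
      = lam * ‖u‖ ^ 2 + lam' * ‖u'‖ ^ 2 - (lam + lam') * (⟪u, u'⟫_ℂ).re := by
    rw [map_sub_eq_sub_of_sub_map_eq G hu hu']
    exact_mod_cast re_inner_sub_ofReal_smul_sub_ofReal_smul (𝕜 := ℂ) u u' lam lam'
  linarith

/-- the two-resolvent energy identity of the Kipnis–Varadhan theory:
if `S = -(G+G*)/2` is positive with positive square root `√S`, `λ, λ' > 0`,
`λu - Gu = f` and `λ'u' - Gu' = f`, then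
`(λ+λ') Re⟨u,u'⟩ = ‖√S(u-u')‖² + λ‖u‖² + λ'‖u'‖²`. -/
theorem kipnis_varadhan_two_resolvent_identity {H : Type*}
    [NormedAddCommGroup H] [InnerProductSpace ℂ H] [CompleteSpace H]
    (G S sqrtS : H →L[ℂ] H)
    (hSdef : S = (-(2 : ℂ)⁻¹) • (G + ContinuousLinearMap.adjoint G))
    (hSpos : ∀ x : H, 0 ≤ (inner ℂ x (S x) : ℂ))
    (hsqrtSpos : ∀ x : H, 0 ≤ (inner ℂ x (sqrtS x) : ℂ))
    (hsqrtS : sqrtS ∘L sqrtS = S)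
    (lam lam' : ℝ) (hlam : 0 < lam) (hlam' : 0 < lam')
    (f u u' : H) (hu : lam • u - G u = f) (hu' : lam' • u' - G u' = f) :
    (lam + lam') * (inner ℂ u u' : ℂ).re
      = ‖sqrtS (u - u')‖ ^ 2 + lam * ‖u‖ ^ 2 + lam' * ‖u'‖ ^ 2 :=
  kipnis_varadhan_two_resolvent_identity_general G S sqrtS hSdef hsqrtSpos hsqrtS lam lam' f u u' hu
    hu'
end
end

section
/- Let H be a complex Hilbert space, G : H → H a bounded linear operator with S := −(1/2)(G + G*) satisfying ⟨x, Sx⟩ ≥ 0 for all x, and let √S be the positive square root of S. Fix f ∈ H and for each λ > 0 let u_λ := (λ I − G)^{−1} f. Then the following are equivalent: (i) (λ + λ') Re ⟨u_λ, u_{λ'}⟩ → 0 as λ, λ' → 0⁺ (jointly, i.e. for all sequences λ_n, λ'_n → 0⁺); (ii) √λ · ‖u_λ‖ → 0 as λ → 0⁺ and √S u_λ converges in H as λ → 0⁺. -/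
/-
Subtracting the resolvent equations `λ u_λ - G u_λ = f` and `λ' u_λ' - G u_λ' = f` gives
`G (u_λ - u_λ') = λ u_λ - λ' u_λ'`; pairing with `u_λ - u_λ'` and using
`Re ⟨z, G z⟩ = -Re ⟨z, S z⟩ = -‖√S z‖²` yields
`(λ + λ') Re ⟨u_λ, u_λ'⟩ = λ ‖u_λ‖² + λ' ‖u_λ'‖² + ‖√S u_λ - √S u_λ'‖²`.
All three terms are nonnegative, so the left side tends to `0` jointly iff each term does: on the
diagonal this is `√λ ‖u_λ‖ → 0`, and off the diagonal it says that `√S u_λ` is Cauchy as `λ → 0⁺`.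
-/

open Filter ComplexOrder RCLike
open scoped Topology InnerProductSpace

theorem LinearMap.isSymmetric_of_inner_map_self_nonneg {E : Type*} [NormedAddCommGroup E]
    [InnerProductSpace ℂ E] {T : E →ₗ[ℂ] E} (hT : ∀ x, 0 ≤ ⟪x, T x⟫_ℂ) : T.IsSymmetric := by
  rw [LinearMap.isSymmetric_iff_inner_map_self_real]
  intro x
  rw [inner_conj_symm, ← inner_conj_symm (T x) x]
  exact (Complex.conj_eq_iff_im.mpr (Complex.nonneg_iff.mp (hT x)).2.symm).symm

theorem re_inner_apply_self_eq_neg_norm_sq {𝕜 E : Type*} [RCLike 𝕜] [NormedAddCommGroup E]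
    [InnerProductSpace 𝕜 E] [CompleteSpace E] {G T : E →L[𝕜] E}
    (hT : (T : E →ₗ[𝕜] E).IsSymmetric) (hTT : T ∘L T = (-(2 : 𝕜)⁻¹) • (G + G.adjoint)) (z : E) :
    re ⟪z, G z⟫_𝕜 = -‖T z‖ ^ 2 := by
  have hadj : re ⟪z, G.adjoint z⟫_𝕜 = re ⟪z, G z⟫_𝕜 := by
    rw [ContinuousLinearMap.adjoint_inner_right, inner_re_symm]
  have hT2 : ‖T z‖ ^ 2 = re ⟪z, T (T z)⟫_𝕜 := by
    rw [← inner_self_eq_norm_sq (𝕜 := 𝕜)]; exact congrArg re (hT z (T z))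
  have hhalf : (-(2 : 𝕜)⁻¹) = ((-2⁻¹ : ℝ) : 𝕜) := by push_cast; rfl
  rw [hT2, ← ContinuousLinearMap.comp_apply, hTT, hhalf, smul_apply,
    inner_smul_right, add_apply, inner_add_right, re_ofReal_mul, map_add, hadj]
  ring

theorem add_mul_re_inner_eq_of_smul_sub_eq {E F : Type*} [NormedAddCommGroup E]
    [InnerProductSpace ℂ E] [FunLike F E E] [AddMonoidHomClass F E E] {G : F} {a b : ℝ} {x y : E}
    (h : a • x - G x = b • y - G y) :
    (a + b) * re ⟪x, y⟫_ℂ = a * ‖x‖ ^ 2 + b * ‖y‖ ^ 2 - re ⟪x - y, G (x - y)⟫_ℂ := by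
  have hG : G (x - y) = a • x - b • y := by
    rw [map_sub]; exact (sub_eq_sub_iff_sub_eq_sub.mp h).symm
  rw [hG, real_smul_eq_coe_smul (K := ℂ) a, real_smul_eq_coe_smul (K := ℂ) b]
  simp only [inner_sub_left, inner_sub_right, inner_smul_right, map_sub, re_ofReal_mul,
    inner_self_eq_norm_sq, inner_re_symm y x]
  ring

theorem tendsto_sq_nhds_zero_iff {α : Type*} {l : Filter α} {f : α → ℝ} :
    Tendsto (fun x => f x ^ 2) l (𝓝 0) ↔ Tendsto f l (𝓝 0) := by
  refine ⟨fun h => ?_, fun h => by simpa using h.pow 2⟩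
  rw [tendsto_zero_iff_abs_tendsto_zero]
  simpa [Function.comp_def, Real.sqrt_sq_eq_abs] using h.sqrt

theorem exists_tendsto_of_tendsto_dist_zero {α E : Type*} [PseudoMetricSpace E] [CompleteSpace E]
    {l : Filter α} [l.NeBot] {w : α → E}
    (h : Tendsto (fun z : α × α => dist (w z.1) (w z.2)) (l ×ˢ l) (𝓝 0)) :
    ∃ v, Tendsto w l (𝓝 v) :=
  CompleteSpace.complete <| cauchy_map_iff'.mpr <| tendsto_uniformity_iff_dist_tendsto_zero.mpr h

theorem tendsto_sq_add_sq_add_dist_sq_iff {α E : Type*} [PseudoMetricSpace E] [CompleteSpace E]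
    {l : Filter α} [l.NeBot] {q : α → ℝ} {w : α → E} :
    Tendsto (fun z : α × α => q z.1 ^ 2 + q z.2 ^ 2 + dist (w z.1) (w z.2) ^ 2) (l ×ˢ l) (𝓝 0) ↔
      Tendsto q l (𝓝 0) ∧ ∃ v, Tendsto w l (𝓝 v) := by
  constructor
  · intro h
    have hdiag : Tendsto (fun a => q a ^ 2 + q a ^ 2 + dist (w a) (w a) ^ 2) l (𝓝 0) :=
      h.comp (tendsto_id.prodMk tendsto_id)
    refine ⟨tendsto_sq_nhds_zero_iff.mp ?_, exists_tendsto_of_tendsto_dist_zero ?_⟩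
    · exact squeeze_zero (fun a => sq_nonneg (q a))
        (fun a => le_add_of_le_of_nonneg (le_add_of_nonneg_left (sq_nonneg _)) (sq_nonneg _)) hdiag
    · refine tendsto_sq_nhds_zero_iff.mp (squeeze_zero (fun z => sq_nonneg _) (fun z => ?_) h)
      exact le_add_of_nonneg_left (by positivity)
  · rintro ⟨hq, v, hw⟩
    have hq2 : Tendsto (fun a => q a ^ 2) l (𝓝 0) := tendsto_sq_nhds_zero_iff.mpr hq
    have hdist : Tendsto (fun z : α × α => dist (w z.1) (w z.2)) (l ×ˢ l) (𝓝 0) := by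
      simpa using (hw.comp tendsto_fst).dist (hw.comp tendsto_snd)
    simpa using ((hq2.comp tendsto_fst).add (hq2.comp tendsto_snd)).add
      (tendsto_sq_nhds_zero_iff.mpr hdist)

theorem add_mul_re_inner_eq_of_resolvent {E : Type*} [NormedAddCommGroup E]
    [InnerProductSpace ℂ E] [CompleteSpace E] {G T : E →L[ℂ] E}
    (hT : (T : E →ₗ[ℂ] E).IsSymmetric) (hTT : T ∘L T = (-(2 : ℂ)⁻¹) • (G + G.adjoint))
    {f x y : E} {a b : ℝ} (ha : 0 ≤ a) (hb : 0 ≤ b) (hx : a • x - G x = f) (hy : b • y - G y = f) :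
    (a + b) * re ⟪x, y⟫_ℂ = (√a * ‖x‖) ^ 2 + (√b * ‖y‖) ^ 2 + dist (T x) (T y) ^ 2 := by
  rw [add_mul_re_inner_eq_of_smul_sub_eq (hx.trans hy.symm),
    re_inner_apply_self_eq_neg_norm_sq hT hTT, map_sub, mul_pow, mul_pow, Real.sq_sqrt ha,
    Real.sq_sqrt hb, dist_eq_norm]
  ring

theorem kipnis_varadhan_conditions_equivalent_general {H : Type*}
    [NormedAddCommGroup H] [InnerProductSpace ℂ H] [CompleteSpace H]
    (G S sqrtS : H →L[ℂ] H)
    (hSdef : S = (-(2 : ℂ)⁻¹) • (G + ContinuousLinearMap.adjoint G))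
    (hsqrtSpos : ∀ x : H, 0 ≤ (inner ℂ x (sqrtS x) : ℂ))
    (hsqrtS : sqrtS ∘L sqrtS = S)
    (f : H) (u : ℝ → H)
    (hu : ∀ lam : ℝ, 0 < lam → lam • u lam - G (u lam) = f) :
    Tendsto (fun z : ℝ × ℝ => (z.1 + z.2) * (inner ℂ (u z.1) (u z.2) : ℂ).re)
        ((nhdsWithin (0 : ℝ) (Set.Ioi 0)) ×ˢ (nhdsWithin (0 : ℝ) (Set.Ioi 0))) (nhds 0)
      ↔ (Tendsto (fun lam : ℝ => Real.sqrt lam * ‖u lam‖)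
            (nhdsWithin (0 : ℝ) (Set.Ioi 0)) (nhds 0) ∧
         ∃ v : H, Tendsto (fun lam : ℝ => sqrtS (u lam))
            (nhdsWithin (0 : ℝ) (Set.Ioi 0)) (nhds v)) := by
  have hsym : (sqrtS : H →ₗ[ℂ] H).IsSymmetric :=
    LinearMap.isSymmetric_of_inner_map_self_nonneg hsqrtSpos
  have hkey : ∀ᶠ z : ℝ × ℝ in 𝓝[>] 0 ×ˢ 𝓝[>] 0,
      (√z.1 * ‖u z.1‖) ^ 2 + (√z.2 * ‖u z.2‖) ^ 2 + dist (sqrtS (u z.1)) (sqrtS (u z.2)) ^ 2 =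
        (z.1 + z.2) * (inner ℂ (u z.1) (u z.2) : ℂ).re := by
    filter_upwards [prod_mem_prod self_mem_nhdsWithin self_mem_nhdsWithin] with z ⟨h1, h2⟩
    exact (add_mul_re_inner_eq_of_resolvent hsym (hsqrtS.trans hSdef) h1.le h2.le
      (hu z.1 h1) (hu z.2 h2)).symm
  exact (tendsto_congr' hkey).symm.trans <|
    tendsto_sq_add_sq_add_dist_sq_iff (q := fun lam => √lam * ‖u lam‖) (w := sqrtS ∘ u)

/-- equivalence of the Kipnis–Varadhan conditions. With `G` bounded,
`S = -(G+G*)/2 ≥ 0` with positive square root `√S`, and resolvent vectors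
`u_λ = (λI - G)^{-1} f`: the joint condition
`(λ+λ') Re⟨u_λ, u_{λ'}⟩ → 0` as `λ, λ' → 0⁺` holds iff
`√λ ‖u_λ‖ → 0` and `√S u_λ` converges in `H` as `λ → 0⁺`. -/
theorem kipnis_varadhan_conditions_equivalent {H : Type*}
    [NormedAddCommGroup H] [InnerProductSpace ℂ H] [CompleteSpace H]
    (G S sqrtS : H →L[ℂ] H)
    (hSdef : S = (-(2 : ℂ)⁻¹) • (G + ContinuousLinearMap.adjoint G))
    (hSpos : ∀ x : H, 0 ≤ (inner ℂ x (S x) : ℂ))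
    (hsqrtSpos : ∀ x : H, 0 ≤ (inner ℂ x (sqrtS x) : ℂ))
    (hsqrtS : sqrtS ∘L sqrtS = S)
    (f : H) (u : ℝ → H)
    (hu : ∀ lam : ℝ, 0 < lam → lam • u lam - G (u lam) = f) :
    Tendsto (fun z : ℝ × ℝ => (z.1 + z.2) * (inner ℂ (u z.1) (u z.2) : ℂ).re)
        ((nhdsWithin (0 : ℝ) (Set.Ioi 0)) ×ˢ (nhdsWithin (0 : ℝ) (Set.Ioi 0))) (nhds 0)
      ↔ (Tendsto (fun lam : ℝ => Real.sqrt lam * ‖u lam‖)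
            (nhdsWithin (0 : ℝ) (Set.Ioi 0)) (nhds 0) ∧
         ∃ v : H, Tendsto (fun lam : ℝ => sqrtS (u lam))
            (nhdsWithin (0 : ℝ) (Set.Ioi 0)) (nhds v)) :=
  kipnis_varadhan_conditions_equivalent_general G S sqrtS hSdef hsqrtSpos hsqrtS f u hu
end
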